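/- Let H be a divisor-closed submonoid of P_fin,0(ℕ). Let S be the submonoid of ℕ generated by the union of all members of H, and let T be the submonoid of ℕ generated by the union of all sets rev(B) for B ∈ H. Then H = {B ∈ P_fin,0(ℕ) : B ⊆ S and rev(B) ⊆ T}. Moreover, there exists A ∈ H such that S is generated by A and T is generated by rev(A); and for any such A one has H = ⟦A⟧. -/

import Mathlib

open Pointwise

/-- The reversal `rev(B) = {max(B) - b : b ∈ B}` of a finite set `B ⊆ ℕ`. -/
def rev (B : Finset ℕ) : Finset ℕ := B.image (fun b => B.sup id - b)

/-- Divisibility in the restricted power monoid `P_fin,0(ℕ)`: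
`B` divides `A` if `A = B + C` for some finite `C` containing `0`. -/
def Dvd0 (B A : Finset ℕ) : Prop := ∃ C : Finset ℕ, 0 ∈ C ∧ A = B + C

/-- Divisor-closed submonoids of `P_fin,0(ℕ)`. -/
def IsDCS (H : Set (Finset ℕ)) : Prop :=
  (∀ A ∈ H, 0 ∈ A) ∧ ({0} : Finset ℕ) ∈ H ∧
    (∀ A ∈ H, ∀ B ∈ H, A + B ∈ H) ∧
    (∀ A ∈ H, ∀ B : Finset ℕ, 0 ∈ B → Dvd0 B A → B ∈ H)

/-- The `n`-fold sumset `nA` of a finite set `A ⊆ ℕ` (with `0A = {0}`). -/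
def nfold (A : Finset ℕ) : ℕ → Finset ℕ
  | 0 => {0}
  | n + 1 => nfold A n + A

/-- `⟦A⟧`: the set of all `B ∈ P_fin,0(ℕ)` dividing some `n`-fold sumset `nA`;
it is the smallest divisor-closed submonoid of `P_fin,0(ℕ)` containing `A`. -/
def ddSub (A : Finset ℕ) : Set (Finset ℕ) :=
  {B | 0 ∈ B ∧ ∃ n : ℕ, Dvd0 B (nfold A n)}

/-!
Fix `0 ∈ A`, `m = max A`, `S = ⟨A⟩`, `T = ⟨rev A⟩`. A numerical semigroup contains every
large multiple of its gcd, so large elements of `S` can be stripped of copies of `m` without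
leaving `S`; hence for `n` large `nA = {y ≤ nm : y ∈ S, nm - y ∈ T}`. If `B ⊆ S` and
`rev B ⊆ T`, the same description with `nm` lowered by `max B` is a cofactor `C` with
`nA = B + C`, so `B ∈ ⟦A⟧`. In a divisor-closed `H` the pairs `(⟨A⟩, ⟨rev A⟩)`, `A ∈ H`, are
directed (take `A + D`), and submonoids of `ℕ` are finitely generated, so a single `A ∈ H`
generates both unions.
-/

section Reversal

variable {A B : Finset ℕ}

theorem le_sup_id {a : ℕ} (ha : a ∈ A) : a ≤ A.sup id :=
  Finset.le_sup (f := id) ha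

theorem sup_id_mem (hA : A.Nonempty) : A.sup id ∈ A := by
  simpa using Finset.sup_mem_of_nonempty (f := id) hA

theorem sup_id_add (hA : A.Nonempty) (hB : B.Nonempty) :
    (A + B).sup id = A.sup id + B.sup id := by
  refine le_antisymm (Finset.sup_le fun x hx => ?_) (le_sup_id (Finset.add_mem_add
    (sup_id_mem hA) (sup_id_mem hB)))
  obtain ⟨a, ha, b, hb, rfl⟩ := Finset.mem_add.1 hx
  exact Nat.add_le_add (le_sup_id ha) (le_sup_id hb)

theorem mem_rev {y : ℕ} : y ∈ rev A ↔ ∃ a ∈ A, A.sup id - a = y :=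
  Finset.mem_image

theorem tsub_mem_rev {a : ℕ} (ha : a ∈ A) : A.sup id - a ∈ rev A :=
  mem_rev.2 ⟨a, ha, rfl⟩

theorem sup_id_mem_rev (h0 : 0 ∈ A) : A.sup id ∈ rev A :=
  tsub_mem_rev h0

theorem zero_mem_rev (h0 : 0 ∈ A) : 0 ∈ rev A :=
  mem_rev.2 ⟨_, sup_id_mem ⟨0, h0⟩, Nat.sub_self _⟩

theorem sup_id_rev (h0 : 0 ∈ A) : (rev A).sup id = A.sup id := by
  refine le_antisymm (Finset.sup_le fun y hy => ?_) (le_sup_id (sup_id_mem_rev h0))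
  obtain ⟨a, -, rfl⟩ := mem_rev.1 hy
  exact Nat.sub_le _ _

theorem rev_rev (h0 : 0 ∈ A) : rev (rev A) = A := by
  ext x
  rw [mem_rev, sup_id_rev h0]
  constructor
  · rintro ⟨_, hy, rfl⟩
    obtain ⟨a, ha, rfl⟩ := mem_rev.1 hy
    rwa [Nat.sub_sub_self (le_sup_id ha)]
  · exact fun hx => ⟨_, tsub_mem_rev hx, Nat.sub_sub_self (le_sup_id hx)⟩

theorem rev_subset_rev_add (h0A : 0 ∈ A) (h0B : 0 ∈ B) : rev A ⊆ rev (A + B) := by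
  intro y hy
  obtain ⟨a, ha, rfl⟩ := mem_rev.1 hy
  rw [mem_rev, sup_id_add ⟨0, h0A⟩ ⟨0, h0B⟩]
  exact ⟨a + B.sup id, Finset.add_mem_add ha (sup_id_mem ⟨0, h0B⟩), by omega⟩

end Reversal

section Sumsets

variable {A : Finset ℕ}

theorem zero_mem_nfold (h0 : 0 ∈ A) : ∀ n, 0 ∈ nfold A n
  | 0 => Finset.mem_singleton_self 0
  | n + 1 => Finset.add_mem_add (zero_mem_nfold h0 n) h0

theorem nfold_mono (h0 : 0 ∈ A) : Monotone (nfold A) :=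
  monotone_nat_of_le_succ fun _ => Finset.subset_add_left _ h0

theorem nfold_add (A : Finset ℕ) (p : ℕ) : ∀ q, nfold A (p + q) = nfold A p + nfold A q
  | 0 => (add_zero _).symm
  | q + 1 => by rw [← add_assoc, nfold, nfold, nfold_add A p q, add_assoc]

theorem coe_closure_eq_iUnion_nfold (h0 : 0 ∈ A) :
    (AddSubmonoid.closure (A : Set ℕ) : Set ℕ) = ⋃ n, (nfold A n : Set ℕ) := by
  refine Set.Subset.antisymm (fun x hx => ?_) (Set.iUnion_subset fun n => ?_)
  · induction hx using AddSubmonoid.closure_induction with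
    | mem x hx => exact Set.mem_iUnion.2 ⟨1, by simpa [nfold] using hx⟩
    | zero => exact Set.mem_iUnion.2 ⟨0, zero_mem_nfold h0 0⟩
    | add x y _ _ hx hy =>
      obtain ⟨p, hx⟩ := Set.mem_iUnion.1 hx
      obtain ⟨q, hy⟩ := Set.mem_iUnion.1 hy
      exact Set.mem_iUnion.2 ⟨p + q, nfold_add A p q ▸ Finset.add_mem_add hx hy⟩
  · induction n with
    | zero => simp [nfold]
    | succ n ih =>
      rintro _ hy
      obtain ⟨x, hx, a, ha, rfl⟩ := Finset.mem_add.1 hy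
      exact add_mem (ih hx) (AddSubmonoid.subset_closure ha)

theorem nfold_subset_closure (h0 : 0 ∈ A) (n : ℕ) :
    (nfold A n : Set ℕ) ⊆ AddSubmonoid.closure (A : Set ℕ) :=
  (coe_closure_eq_iUnion_nfold h0).symm ▸ Set.subset_iUnion (fun n => (nfold A n : Set ℕ)) n

theorem exists_subset_nfold (h0 : 0 ∈ A) {F : Finset ℕ}
    (hF : (F : Set ℕ) ⊆ AddSubmonoid.closure (A : Set ℕ)) : ∃ n, (F : Set ℕ) ⊆ nfold A n :=
  Directed.exists_mem_subset_of_finset_subset_biUnion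
    (Monotone.directed_le fun _ _ h => Finset.coe_subset.2 (nfold_mono h0 h))
    (coe_closure_eq_iUnion_nfold h0 ▸ hF)

theorem le_of_mem_nfold : ∀ {n x : ℕ}, x ∈ nfold A n → x ≤ n * A.sup id
  | 0, _, hx => by simp_all [nfold]
  | n + 1, _, hy => by
    obtain ⟨x, hx, a, ha, rfl⟩ := Finset.mem_add.1 hy
    have hxn := le_of_mem_nfold hx
    have ham := le_sup_id ha
    rw [Nat.add_one_mul]
    omega

theorem tsub_mem_nfold_rev :
    ∀ {n x : ℕ}, x ∈ nfold A n → n * A.sup id - x ∈ nfold (rev A) n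
  | 0, _, hx => by simp_all [nfold]
  | n + 1, _, hy => by
    obtain ⟨x, hx, a, ha, rfl⟩ := Finset.mem_add.1 hy
    have hxn := le_of_mem_nfold hx
    have ham := le_sup_id ha
    have := Finset.add_mem_add (tsub_mem_nfold_rev hx) (tsub_mem_rev ha)
    rwa [show n * A.sup id - x + (A.sup id - a) = (n + 1) * A.sup id - (x + a) by
      rw [Nat.add_one_mul]; omega] at this

end Sumsets

theorem Nat.exists_tsub_mem_closure_of_add_le (s : Set ℕ) :
    ∃ G, ∀ x ∈ AddSubmonoid.closure s, ∀ y ∈ AddSubmonoid.closure s,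
      y + G ≤ x → x - y ∈ AddSubmonoid.closure s := by
  obtain ⟨G, hG⟩ := Nat.exists_mem_closure_of_ge s
  exact ⟨G, fun x hx y hy hxy => hG _ (by omega)
    (Nat.dvd_sub (Nat.setGcd_dvd_of_mem_closure hx) (Nat.setGcd_dvd_of_mem_closure hy))⟩

section LargeSumsets

variable {A B : Finset ℕ}

theorem exists_mem_nfold_of_mem_closure (h0 : 0 ∈ A) :
    ∃ t, ∀ n ≥ t, ∀ x ∈ AddSubmonoid.closure (A : Set ℕ),
      x + t * A.sup id ≤ n * A.sup id → x ∈ nfold A n := by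
  classical
  set m := A.sup id
  have hmA : m ∈ A := sup_id_mem ⟨0, h0⟩
  obtain ⟨G, hG⟩ := Nat.exists_tsub_mem_closure_of_add_le (A : Set ℕ)
  -- Below `m + G` finitely many elements need a bounded number of summands; above it,
  -- `x - m` stays in the closure, so one more summand `m` suffices.
  obtain ⟨t, ht⟩ := exists_subset_nfold h0
    (F := (Finset.range (m + G)).filter (· ∈ AddSubmonoid.closure (A : Set ℕ)))
    fun x hx => (Finset.mem_filter.1 hx).2
  refine ⟨t, fun n hn => ?_⟩
  induction n, hn using Nat.le_induction with
  | base =>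
    intro x _ hx
    obtain rfl : x = 0 := by omega
    exact zero_mem_nfold h0 t
  | succ n htn ih =>
    intro x hx hxn
    rw [Nat.add_one_mul] at hxn
    by_cases hxG : x < m + G
    · exact nfold_mono h0 (by omega) (ht (by simp [hxG, hx]))
    · have hxm := Finset.add_mem_add
        (ih (x - m) (hG x hx m (AddSubmonoid.subset_closure hmA) (by omega)) (by omega)) hmA
      rwa [Nat.sub_add_cancel (by omega)] at hxm

theorem exists_mem_nfold_iff (h0 : 0 ∈ A) :
    ∃ N, ∀ n ≥ N, ∀ y, y ∈ nfold A n ↔ y ≤ n * A.sup id ∧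
      y ∈ AddSubmonoid.closure (A : Set ℕ) ∧
      n * A.sup id - y ∈ AddSubmonoid.closure (rev A : Set ℕ) := by
  obtain ⟨t, ht⟩ := exists_mem_nfold_of_mem_closure h0
  obtain ⟨t', ht'⟩ := exists_mem_nfold_of_mem_closure (zero_mem_rev h0)
  rw [sup_id_rev h0] at ht'
  set m := A.sup id
  refine ⟨t + t', fun n hn y => ⟨fun hy => ⟨le_of_mem_nfold hy, nfold_subset_closure h0 n hy,
    nfold_subset_closure (zero_mem_rev h0) n (tsub_mem_nfold_rev hy)⟩, ?_⟩⟩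
  rintro ⟨hyn, hyS, hyT⟩
  have htn : t * m + t' * m ≤ n * m := by
    rw [← Nat.add_mul]
    exact Nat.mul_le_mul_right m hn
  by_cases hy : y + t * m ≤ n * m
  · exact ht n (by omega) y hyS hy
  · -- `nm - y` is then small, so it lies in `nfold (rev A) n`; reflect back.
    have hy' := tsub_mem_nfold_rev (ht' n (by omega) _ hyT (by omega))
    rwa [rev_rev h0, sup_id_rev h0, Nat.sub_sub_self hyn] at hy'

theorem dvd0_nfold_of_subset_closure (h0A : 0 ∈ A) (hm : 0 < A.sup id) (h0B : 0 ∈ B)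
    (hBS : (B : Set ℕ) ⊆ AddSubmonoid.closure (A : Set ℕ))
    (hBT : (rev B : Set ℕ) ⊆ AddSubmonoid.closure (rev A : Set ℕ)) :
    ∃ n, Dvd0 B (nfold A n) := by
  classical
  set S := AddSubmonoid.closure (A : Set ℕ)
  set T := AddSubmonoid.closure (rev A : Set ℕ)
  obtain ⟨N, hN⟩ := exists_mem_nfold_iff h0A
  obtain ⟨GS, hGS⟩ := Nat.exists_tsub_mem_closure_of_add_le (A : Set ℕ)
  obtain ⟨GT, hGT⟩ := Nat.exists_tsub_mem_closure_of_add_le (rev A : Set ℕ)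
  set b := B.sup id
  have hbB : b ∈ B := sup_id_mem ⟨0, h0B⟩
  have hbS : b ∈ S := hBS hbB
  have hbT : b ∈ T := hBT (sup_id_mem_rev h0B)
  set n := N + 2 * b + GS + GT
  set L := n * A.sup id
  have hnL : n ≤ L := Nat.le_mul_of_pos_right n hm
  have hLT : L ∈ T := by
    simpa [L] using nsmul_mem (AddSubmonoid.subset_closure (sup_id_mem_rev h0A)) n
  set C := (Finset.range (L - b + 1)).filter fun x => x ∈ S ∧ L - b - x ∈ T
  have mem_C : ∀ x, x ∈ C ↔ x ≤ L - b ∧ x ∈ S ∧ L - b - x ∈ T := by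
    simp [C]
  refine ⟨n, C, (mem_C 0).2 ⟨Nat.zero_le _, zero_mem _, hGT _ hLT _ hbT (by omega)⟩, ?_⟩
  ext y
  rw [hN n (by omega), Finset.mem_add]
  constructor
  · rintro ⟨hyL, hyS, hyT⟩
    by_cases hy : y + b + GT ≤ L
    · refine ⟨0, h0B, y, (mem_C y).2 ⟨by omega, hyS, ?_⟩, zero_add y⟩
      rw [Nat.sub_right_comm]
      exact hGT _ hyT _ hbT (by omega)
    · refine ⟨b, hbB, y - b, (mem_C _).2 ⟨by omega, hGS _ hyS _ hbS (by omega), ?_⟩, by omega⟩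
      rwa [show L - b - (y - b) = L - y by omega]
  · rintro ⟨c, hc, x, hx, rfl⟩
    obtain ⟨hxL, hxS, hxT⟩ := (mem_C x).1 hx
    have hcb := le_sup_id hc
    refine ⟨by omega, add_mem (hBS hc) hxS, ?_⟩
    rw [show L - (c + x) = L - b - x + (b - c) by omega]
    exact add_mem hxT (hBT (tsub_mem_rev hc))

theorem mem_ddSub_of_subset_closure (h0A : 0 ∈ A) (h0B : 0 ∈ B)
    (hBS : (B : Set ℕ) ⊆ AddSubmonoid.closure (A : Set ℕ))
    (hBT : (rev B : Set ℕ) ⊆ AddSubmonoid.closure (rev A : Set ℕ)) :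
    B ∈ ddSub A := by
  refine ⟨h0B, ?_⟩
  rcases (A.sup id).eq_zero_or_pos with hm | hm
  · have hA : (A : Set ℕ) ⊆ (⊥ : AddSubmonoid ℕ) := fun a ha =>
      AddSubmonoid.mem_bot.2 (Nat.eq_zero_of_le_zero (hm ▸ le_sup_id ha))
    have hB : B = {0} := Finset.eq_singleton_iff_unique_mem.2
      ⟨h0B, fun b hb => by simpa using AddSubmonoid.closure_le.2 hA (hBS hb)⟩
    exact ⟨0, {0}, Finset.mem_singleton_self 0, by simp [hB, nfold]⟩
  · exact dvd0_nfold_of_subset_closure h0A hm h0B hBS hBT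

end LargeSumsets

namespace IsDCS

variable {H : Set (Finset ℕ)} {A : Finset ℕ}

theorem nfold_mem (hH : IsDCS H) (hA : A ∈ H) : ∀ n, nfold A n ∈ H
  | 0 => hH.2.1
  | n + 1 => hH.2.2.1 _ (hH.nfold_mem hA n) _ hA

theorem ddSub_subset (hH : IsDCS H) (hA : A ∈ H) : ddSub A ⊆ H :=
  fun _ ⟨hB0, n, hBn⟩ => hH.2.2.2 _ (hH.nfold_mem hA n) _ hB0 hBn

theorem exists_mem_finset_subset_closure (hH : IsDCS H) {f : Finset ℕ → Set ℕ}
    (hf : ∀ A ∈ H, ∀ D ∈ H, f A ⊆ f (A + D)) {F : Finset ℕ}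
    (hF : (F : Set ℕ) ⊆ AddSubmonoid.closure (⋃ C ∈ H, f C)) :
    ∃ A ∈ H, (F : Set ℕ) ⊆ AddSubmonoid.closure (f A) := by
  obtain ⟨-, hzero, hadd, -⟩ := hH
  have hdir :
      DirectedOn (fun A D => AddSubmonoid.closure (f A) ≤ AddSubmonoid.closure (f D)) H :=
    fun A hA D hD => ⟨A + D, hadd A hA D hD, AddSubmonoid.closure_mono (hf A hA D hD),
      add_comm A D ▸ AddSubmonoid.closure_mono (hf D hD A hA)⟩
  have hunion : (AddSubmonoid.closure (⋃ C ∈ H, f C) : Set ℕ) =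
      ⋃ C ∈ H, (AddSubmonoid.closure (f C) : Set ℕ) := by
    ext x
    simp only [AddSubmonoid.closure_iUnion, SetLike.mem_coe, Set.mem_iUnion, exists_prop,
      AddSubmonoid.mem_biSup_of_directedOn ⟨_, hzero⟩ hdir]
  exact DirectedOn.exists_mem_subset_of_finset_subset_biUnion ⟨_, hzero⟩ hdir (hunion ▸ hF)

theorem exists_mem_subset_closure_and_rev (hH : IsDCS H) {F F' : Finset ℕ}
    (hF : (F : Set ℕ) ⊆ AddSubmonoid.closure (⋃ C ∈ H, (C : Set ℕ)))
    (hF' : (F' : Set ℕ) ⊆ AddSubmonoid.closure (⋃ C ∈ H, (rev C : Set ℕ))) :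
    ∃ A ∈ H, (F : Set ℕ) ⊆ AddSubmonoid.closure (A : Set ℕ) ∧
      (F' : Set ℕ) ⊆ AddSubmonoid.closure (rev A : Set ℕ) := by
  classical
  have subset_add : ∀ A ∈ H, ∀ D ∈ H, A ⊆ A + D := fun A _ D hD =>
    Finset.subset_add_left A (hH.1 D hD)
  have rev_subset : ∀ A ∈ H, ∀ D ∈ H, rev A ⊆ rev (A + D) := fun A hA D hD =>
    rev_subset_rev_add (hH.1 A hA) (hH.1 D hD)
  obtain ⟨D, hD, hFD⟩ := hH.exists_mem_finset_subset_closure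
    (fun A hA D hD => Finset.coe_subset.2 (subset_add A hA D hD)) hF
  obtain ⟨E, hE, hFE⟩ := hH.exists_mem_finset_subset_closure
    (fun A hA D hD => Finset.coe_subset.2 (rev_subset A hA D hD)) hF'
  refine ⟨D + E, hH.2.2.1 D hD E hE,
    hFD.trans (AddSubmonoid.closure_mono (Finset.coe_subset.2 (subset_add D hD E hE))),
    hFE.trans (AddSubmonoid.closure_mono (Finset.coe_subset.2 ?_))⟩
  rw [add_comm]
  exact rev_subset E hE D hD

theorem eq_setOf_subset_closure (hH : IsDCS H) :
    H = {B : Finset ℕ | 0 ∈ B ∧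
      (B : Set ℕ) ⊆ (AddSubmonoid.closure (⋃ C ∈ H, (C : Set ℕ)) : Set ℕ) ∧
      (rev B : Set ℕ) ⊆ (AddSubmonoid.closure (⋃ C ∈ H, (rev C : Set ℕ)) : Set ℕ)} := by
  refine Set.Subset.antisymm (fun B hB => ⟨hH.1 B hB,
    (Set.subset_biUnion_of_mem (u := fun C : Finset ℕ => (C : Set ℕ)) hB).trans
      AddSubmonoid.subset_closure,
    (Set.subset_biUnion_of_mem (u := fun C => (rev C : Set ℕ)) hB).trans
      AddSubmonoid.subset_closure⟩) ?_
  rintro B ⟨hB0, hBS, hBT⟩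
  obtain ⟨A, hA, hBA, hBA'⟩ := hH.exists_mem_subset_closure_and_rev hBS hBT
  exact hH.ddSub_subset hA (mem_ddSub_of_subset_closure (hH.1 A hA) hB0 hBA hBA')

theorem exists_closure_eq (hH : IsDCS H) :
    ∃ A ∈ H,
      AddSubmonoid.closure (A : Set ℕ) = AddSubmonoid.closure (⋃ C ∈ H, (C : Set ℕ)) ∧
      AddSubmonoid.closure (rev A : Set ℕ) =
        AddSubmonoid.closure (⋃ C ∈ H, (rev C : Set ℕ)) := by
  obtain ⟨F, hF⟩ := Nat.addSubmonoid_fg (AddSubmonoid.closure (⋃ C ∈ H, (C : Set ℕ)))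
  obtain ⟨F', hF'⟩ :=
    Nat.addSubmonoid_fg (AddSubmonoid.closure (⋃ C ∈ H, (rev C : Set ℕ)))
  obtain ⟨A, hA, hFA, hFA'⟩ := hH.exists_mem_subset_closure_and_rev
    (hF ▸ AddSubmonoid.subset_closure) (hF' ▸ AddSubmonoid.subset_closure)
  exact ⟨A, hA,
    le_antisymm (AddSubmonoid.closure_mono
      (Set.subset_biUnion_of_mem (u := fun C : Finset ℕ => (C : Set ℕ)) hA))
      (hF ▸ AddSubmonoid.closure_le.2 hFA),
    le_antisymm (AddSubmonoid.closure_mono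
      (Set.subset_biUnion_of_mem (u := fun C => (rev C : Set ℕ)) hA))
      (hF' ▸ AddSubmonoid.closure_le.2 hFA')⟩

theorem eq_ddSub (hH : IsDCS H) (hA : A ∈ H)
    (hAS : AddSubmonoid.closure (A : Set ℕ) = AddSubmonoid.closure (⋃ C ∈ H, (C : Set ℕ)))
    (hAT : AddSubmonoid.closure (rev A : Set ℕ) =
      AddSubmonoid.closure (⋃ C ∈ H, (rev C : Set ℕ))) :
    H = ddSub A := by
  refine Set.Subset.antisymm (fun B hB => ?_) (hH.ddSub_subset hA)
  obtain ⟨hB0, hBS, hBT⟩ := hH.eq_setOf_subset_closure ▸ hB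
  exact mem_ddSub_of_subset_closure (hH.1 A hA) hB0 (hAS ▸ hBS) (hAT ▸ hBT)

end IsDCS

/-- Characterization of the divisor-closed submonoids of `P_fin,0(ℕ)`:
every divisor-closed submonoid `H` equals
`{B ∈ P_fin,0(ℕ) : B ⊆ S and rev(B) ⊆ T}` where `S = ⟨⋃_{C ∈ H} C⟩` and
`T = ⟨⋃_{C ∈ H} rev C⟩`; moreover there is `A ∈ H` with `⟨A⟩ = S`, `⟨rev A⟩ = T`,
and for any such `A` one has `H = ⟦A⟧`. -/
theorem divisor_closed_submonoid_characterization (H : Set (Finset ℕ)) (hH : IsDCS H) :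
    H = {B : Finset ℕ | 0 ∈ B ∧
          (B : Set ℕ) ⊆ (AddSubmonoid.closure (⋃ C ∈ H, (C : Set ℕ)) : Set ℕ) ∧
          (rev B : Set ℕ) ⊆ (AddSubmonoid.closure (⋃ C ∈ H, (rev C : Set ℕ)) : Set ℕ)} ∧
    (∃ A ∈ H,
      AddSubmonoid.closure (A : Set ℕ) = AddSubmonoid.closure (⋃ C ∈ H, (C : Set ℕ)) ∧
      AddSubmonoid.closure (rev A : Set ℕ) =
        AddSubmonoid.closure (⋃ C ∈ H, (rev C : Set ℕ))) ∧
    (∀ A ∈ H,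
      AddSubmonoid.closure (A : Set ℕ) = AddSubmonoid.closure (⋃ C ∈ H, (C : Set ℕ)) →
      AddSubmonoid.closure (rev A : Set ℕ) =
        AddSubmonoid.closure (⋃ C ∈ H, (rev C : Set ℕ)) →
      H = ddSub A) :=
  ⟨hH.eq_setOf_subset_closure, hH.exists_closure_eq, fun _ hA => hH.eq_ddSub hA⟩
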